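/- Let c be a choice function on a finite nonempty set X, let ▷ be a strict linear order on X with X = {x^▷_1, …, x^▷_{|X|}} enumerated in decreasing ▷-order, and let Harm_c(▷) be a rationalization by self-punishment of c by ▷ with max{ i : ▷_i ∈ Harm_c(▷) } = j for some 0 ≤ j ≤ |X|−1. If A is a menu with c(A) = x^▷_l for some l with j < l ≤ |X|, then A contains no element x^▷_k with j < k < l; that is, A ∩ { y ∈ X : x^▷_j ▷ y and y ▷ x^▷_l } = ∅. -/

import Mathlib

variable {X : Type*}

/-- A strict linear order: asymmetric, transitive, complete. -/
def IsSLO (r : X → X → Prop) : Prop :=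
  (∀ a b : X, r a b → ¬ r b a) ∧ (∀ a b d : X, r a b → r b d → r a d) ∧
    (∀ a b : X, a ≠ b → r a b ∨ r b a)

/-- The set of the top `i` elements of `X` with respect to `r`
(those with fewer than `i` elements strictly above them). -/
def topSet (r : X → X → Prop) (i : ℕ) : Set X := {a | Set.ncard {b | r b a} < i}

/-- The `i`-th harmful distortion of `r`: the top `i` elements are moved,
in reverse order, below all the other elements. -/
def harmful (r : X → X → Prop) (i : ℕ) : X → X → Prop := fun a b =>
  (b ∈ topSet r i ∧ (a ∈ topSet r i → r b a)) ∨
    (a ∉ topSet r i ∧ b ∉ topSet r i ∧ r a b)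

/-- A choice function selects an element from every nonempty menu. -/
def IsChoice (c : Finset X → X) : Prop := ∀ A : Finset X, A.Nonempty → c A ∈ A

/-- `x` is the `r`-maximum of the menu `A`. -/
def IsMaxOf (r : X → X → Prop) (A : Finset X) (x : X) : Prop :=
  x ∈ A ∧ ∀ y ∈ A, y ≠ x → r x y

/-- A reversal (violation of WARP) of `c`. -/
def IsReversal [DecidableEq X] (c : Finset X → X) (A B : Finset X) : Prop :=
  A.Nonempty ∧ B.Nonempty ∧ A ≠ B ∧ c A ≠ c B ∧ c A ∈ A ∩ B ∧ c B ∈ A ∩ B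

/-- `I` is (the index set of) a rationalization by self-punishment of `c` by `r`. -/
def RSP [Fintype X] (c : Finset X → X) (r : X → X → Prop) (I : Finset ℕ) : Prop :=
  I.Nonempty ∧ (∀ i ∈ I, i ≤ Fintype.card X - 1) ∧
    ∀ A : Finset X, A.Nonempty → ∃ i ∈ I, IsMaxOf (harmful r i) A (c A)

/-- The degree of self-punishment of `c`: the minimum over all strict linear orders `r`
and all rationalizations by self-punishment of `c` by `r` of the maximal index used. -/
noncomputable def sp [Fintype X] (c : Finset X → X) : ℕ :=
  sInf { m : ℕ | ∃ r : X → X → Prop, IsSLO r ∧ ∃ I : Finset ℕ,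
    RSP c r I ∧ m ∈ I ∧ ∀ i ∈ I, i ≤ m }

/-- `c` is inconsistent: every ordered pair of distinct items is selected in some reversal. -/
def Inconsistent [DecidableEq X] (c : Finset X → X) : Prop :=
  ∀ x y : X, x ≠ y → ∃ A B : Finset X, IsReversal c A B ∧ c A = x ∧ c B = y

/-- The revealed preference `▷^{c,x}`. -/
def cxPref (c : Finset X → X) (x : X) : X → X → Prop := fun y z =>
  (y = x ∧ z ≠ x) ∨
    (y ≠ x ∧ z ≠ x ∧ y ≠ z ∧ ∃ A : Finset X, x ∉ A ∧ z ∈ A ∧ c A = y)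

/-- `c` violates WARP under constant nonreciprocal selection of `j` items. -/
def ViolatesCNS [Fintype X] [DecidableEq X] (c : Finset X → X) (j : ℕ) : Prop :=
  (∀ D : Finset X, D.card < j → ∃ A B : Finset X, IsReversal c A B ∧ c A ∉ D ∧ c B ∉ D) ∧
    ∃ xs : Finset X, xs.card = j ∧
      (∀ A B : Finset X, IsReversal c A B → c A ∈ xs ∨ c B ∈ xs) ∧
      (∀ x ∈ xs, ∃ A B : Finset X, ∃ y : X, IsReversal c A B ∧ y ∉ xs ∧
        ((c A = x ∧ c B = y) ∨ (c A = y ∧ c B = x)))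

/-- The relation `▷^c` built from the witnesses `x 1, …, x j`. -/
def witnessPref (c : Finset X → X) (x : ℕ → X) (j : ℕ) : X → X → Prop := fun y z =>
  (∃ g h : ℕ, 1 ≤ g ∧ g < h ∧ h ≤ j ∧ y = x g ∧ z = x h) ∨
    ((∀ g : ℕ, 1 ≤ g → g ≤ j → y ≠ x g) ∧ (∀ g : ℕ, 1 ≤ g → g ≤ j → z ≠ x g) ∧
      ∃ A : Finset X, z ∈ A ∧ c A = y) ∨
    ((∃ g : ℕ, 1 ≤ g ∧ g ≤ j ∧ y = x g) ∧ (∀ g : ℕ, 1 ≤ g → g ≤ j → z ≠ x g))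

/-! Let `▷_i` be the distortion that rationalizes `c` on `A`. Since `i ≤ j < k`, the element
`e k` is not among the top `i` elements of `▷`, and `▷_i` ranks something above such an element
only if `▷` does. So `c A = e l ▷_i e k` would force `e l ▷ e k`, against `e k ▷ e l`. -/

section HarmfulDistortion

variable {r : X → X → Prop}

theorem IsSLO.irrefl (hr : IsSLO r) (a : X) : ¬ r a a := fun h => hr.1 a a h h

theorem rel_of_harmful_of_notMem_topSet {i : ℕ} {a b : X} (ha : a ∉ topSet r i)
    (hab : harmful r i b a) : r b a := by
  rcases hab with ⟨ha', _⟩ | ⟨_, _, hba⟩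
  · exact absurd ha' ha
  · exact hba

variable {e : ℕ → X} {n : ℕ}

theorem injOn_Icc_of_rel_of_lt (hirr : ∀ a, ¬ r a a)
    (hord : ∀ h i : ℕ, 1 ≤ h → h < i → i ≤ n → r (e h) (e i)) :
    Set.InjOn e (Set.Icc 1 n) := by
  intro a ha b hb hab
  by_contra hne
  rcases lt_or_gt_of_ne hne with hlt | hlt
  · exact hirr (e b) (hab ▸ hord a b ha.1 hlt hb.2)
  · exact hirr (e a) (hab ▸ hord b a hb.1 hlt ha.2)

theorem sub_one_le_ncard_rel_apply [Finite X] (hirr : ∀ a, ¬ r a a)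
    (hord : ∀ h i : ℕ, 1 ≤ h → h < i → i ≤ n → r (e h) (e i)) {k : ℕ} (hk : k ≤ n) :
    k - 1 ≤ {b | r b (e k)}.ncard := by
  have hinj : Set.InjOn e (Set.Ico 1 k) :=
    (injOn_Icc_of_rel_of_lt hirr hord).mono
      (Set.Ico_subset_Icc_self.trans (Set.Icc_subset_Icc_right hk))
  calc k - 1 = (Set.Ico 1 k).ncard := (Set.ncard_Ico_nat 1 k).symm
    _ ≤ {b | r b (e k)}.ncard :=
      Set.ncard_le_ncard_of_injOn e (fun a ha => hord a k ha.1 ha.2 hk) hinj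

theorem apply_notMem_topSet_of_lt [Finite X] (hirr : ∀ a, ¬ r a a)
    (hord : ∀ h i : ℕ, 1 ≤ h → h < i → i ≤ n → r (e h) (e i)) {i k : ℕ} (hik : i < k)
    (hk : k ≤ n) : e k ∉ topSet r i := by
  have := sub_one_le_ncard_rel_apply hirr hord hk
  simp only [topSet, Set.mem_ofPred_eq, not_lt]
  omega

end HarmfulDistortion

theorem stmt10_general [Fintype X] (c : Finset X → X)
    (r : X → X → Prop) (hr : IsSLO r)
    (e : ℕ → X)
    (hord : ∀ h i : ℕ, 1 ≤ h → h < i → i ≤ Fintype.card X → r (e h) (e i))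
    (j : ℕ)
    (I : Finset ℕ) (hI : RSP c r I) (hmax : ∀ i ∈ I, i ≤ j) :
    ∀ A : Finset X, A.Nonempty → ∀ l : ℕ, j < l → l ≤ Fintype.card X → c A = e l →
      ∀ k : ℕ, j < k → k < l → e k ∉ A := by
  intro A hA l _ hl hcA k hjk hkl hek
  obtain ⟨i, hiI, -, hcmax⟩ := hI.2.2 A hA
  have hkl' : r (e k) (e l) := hord k l (by omega) hkl hl
  have hne : e k ≠ e l := fun h => hr.irrefl _ (h ▸ hkl')
  have hk_top : e k ∉ topSet r i :=
    apply_notMem_topSet_of_lt hr.irrefl hord (by have := hmax i hiI; omega) (by omega)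
  have hlk : r (e l) (e k) :=
    rel_of_harmful_of_notMem_topSet hk_top (hcA ▸ hcmax (e k) hek (hcA ▸ hne))
  exact hr.1 _ _ hkl' hlk

theorem stmt10 [Fintype X] [DecidableEq X] (c : Finset X → X) (hc : IsChoice c)
    (r : X → X → Prop) (hr : IsSLO r)
    (e : ℕ → X)
    (hsurj : ∀ x : X, ∃ h : ℕ, 1 ≤ h ∧ h ≤ Fintype.card X ∧ e h = x)
    (hord : ∀ h i : ℕ, 1 ≤ h → h < i → i ≤ Fintype.card X → r (e h) (e i))
    (j : ℕ) (hj : j ≤ Fintype.card X - 1)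
    (I : Finset ℕ) (hI : RSP c r I) (hjI : j ∈ I) (hmax : ∀ i ∈ I, i ≤ j) :
    ∀ A : Finset X, A.Nonempty → ∀ l : ℕ, j < l → l ≤ Fintype.card X → c A = e l →
      ∀ k : ℕ, j < k → k < l → e k ∉ A :=
  stmt10_general c r hr e hord j I hI hmax
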